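/- Let ξ : ℂ → ℂ be an entire function, not identically zero, with ξ(s) = ξ(1-s) (or ξ(s) = -ξ(1-s)), and suppose ξ(1/(1-z)) is analytic and nonvanishing on the open unit disk except possibly at points corresponding to zeros on Re s = 1/2. Define λ(n+1) as the Taylor coefficients of φ'(z)/φ(z) at z = 0, where φ(z) = ξ(1/(1-z)). If the power series ∑ λ(n+1) z^n converges for all |z| < 1, then all zeros of ξ lie on the line Re s = 1/2. -/

import Mathlib

/-!
Under `z = 1 - 1/s` the half-plane `Re s > 1/2` becomes the unit disk and `ξ` becomes
`φ z = ξ (1 / (1 - z))`. Near `0` we have `φ' = φ * F`, where `F` is the sum of the series; as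
`F` is analytic on the whole disk, the identity theorem extends this identity to the disk. There a
zero of `φ` of order `k ≥ 1` would be a zero of `φ'` of order `k - 1` but of `φ * F` of order at
least `k`, so `φ` has no zeros in the disk. The functional equation carries a zero with
`Re s < 1/2` to one with `Re s > 1/2`.
-/
open Filter Topology Set

theorem FormalMultilinearSeries.le_radius_ofScalars_of_summable {𝕜 : Type*} [RCLike 𝕜]
    {c : ℕ → 𝕜} {R : NNReal} (hc : ∀ z : 𝕜, ‖z‖ < R → Summable fun n => c n * z ^ n) :
    (R : ENNReal) ≤ (ofScalars 𝕜 c).radius := by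
  refine ENNReal.le_of_forall_nnreal_lt fun r hr =>
    (ofScalars 𝕜 c).le_radius_of_tendsto (l := 0) ?_
  have hr' : ‖((r : ℝ) : 𝕜)‖ < R := by simpa using hr
  simpa [ofScalars_norm, norm_mul, norm_pow] using (hc _ hr').tendsto_atTop_zero.norm

theorem analyticOnNhd_tsum_mul_pow {𝕜 : Type*} [RCLike 𝕜]
    {c : ℕ → 𝕜} {R : NNReal} (hc : ∀ z : 𝕜, ‖z‖ < R → Summable fun n => c n * z ^ n) :
    AnalyticOnNhd 𝕜 (fun z => ∑' n, c n * z ^ n) (Metric.ball 0 R) := by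
  have hball : Metric.ball (0 : 𝕜) R ⊆
      Metric.eball 0 (FormalMultilinearSeries.ofScalars 𝕜 c).radius := by
    rw [← Metric.eball_ofReal, ENNReal.ofReal_coe_nnreal]
    exact Metric.eball_subset_eball
      (FormalMultilinearSeries.le_radius_ofScalars_of_summable hc)
  convert (FormalMultilinearSeries.ofScalars 𝕜 c).analyticOnNhd.mono hball using 2 with z
  exact (FormalMultilinearSeries.ofScalars_sum_eq c z).symm

section
variable {𝕜 : Type*} [NontriviallyNormedField 𝕜] {φ f : 𝕜 → 𝕜} {U : Set 𝕜} {z₀ z₁ : 𝕜}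

theorem AnalyticAt.eventually_eq_zero_of_deriv_eq_mul [CharZero 𝕜] [CompleteSpace 𝕜]
    (hφ : AnalyticAt 𝕜 φ z₀) (hf : AnalyticAt 𝕜 f z₀) (h : deriv φ =ᶠ[𝓝 z₀] φ * f)
    (h0 : φ z₀ = 0) : ∀ᶠ z in 𝓝 z₀, φ z = 0 := by
  rw [← analyticOrderAt_eq_top]
  by_contra hord
  obtain ⟨n, hn⟩ := ENat.ne_top_iff_exists.mp hord
  have hn0 : n ≠ 0 := by
    rintro rfl
    exact analyticOrderAt_ne_zero.mpr ⟨hφ, h0⟩ (by exact_mod_cast hn.symm)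
  obtain ⟨m, rfl⟩ := Nat.exists_eq_add_one_of_ne_zero hn0
  have hderiv : analyticOrderAt (deriv φ) z₀ = m :=
    analyticOrderAt_deriv_of_pos hφ (by rw [← hn]; push_cast; rfl)
  rw [analyticOrderAt_congr h, analyticOrderAt_mul hφ hf, ← hn] at hderiv
  have : ((m + 1 : ℕ) : ℕ∞) ≤ m := hderiv ▸ le_self_add
  norm_cast at this
  omega

theorem AnalyticOnNhd.not_eventually_eq_zero_of_ne_zero (hφ : AnalyticOnNhd 𝕜 φ U)
    (hU : IsPreconnected U) (hz₁ : z₁ ∈ U) (hφz₁ : φ z₁ ≠ 0) (hz₀ : z₀ ∈ U) :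
    ¬∀ᶠ z in 𝓝 z₀, φ z = 0 :=
  fun h => hφz₁ (hφ.eqOn_zero_of_preconnected_of_eventuallyEq_zero hU hz₀ h hz₁)

theorem AnalyticOnNhd.ne_zero_of_deriv_eq_mul [CharZero 𝕜] [CompleteSpace 𝕜]
    (hφ : AnalyticOnNhd 𝕜 φ U) (hf : AnalyticOnNhd 𝕜 f U) (hUo : IsOpen U)
    (hU : IsPreconnected U) (h : EqOn (deriv φ) (φ * f) U) (hz₁ : z₁ ∈ U) (hφz₁ : φ z₁ ≠ 0)
    (hz₀ : z₀ ∈ U) : φ z₀ ≠ 0 := fun h0 =>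
  hφ.not_eventually_eq_zero_of_ne_zero hU hz₁ hφz₁ hz₀ <|
    (hφ z₀ hz₀).eventually_eq_zero_of_deriv_eq_mul (hf z₀ hz₀)
      (eventuallyEq_of_mem (hUo.mem_nhds hz₀) h) h0

theorem AnalyticOnNhd.eqOn_deriv_mul_of_logDeriv_eventuallyEq [CompleteSpace 𝕜]
    (hφ : AnalyticOnNhd 𝕜 φ U) (hf : AnalyticOnNhd 𝕜 f U)
    (hU : IsPreconnected U) (hz₁ : z₁ ∈ U) (hφz₁ : φ z₁ ≠ 0) (hz₀ : z₀ ∈ U)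
    (h : logDeriv φ =ᶠ[𝓝 z₀] f) : EqOn (deriv φ) (φ * f) U := by
  have hne : ∀ᶠ z in 𝓝[≠] z₀, φ z ≠ 0 :=
    ((hφ z₀ hz₀).eventually_eq_zero_or_eventually_ne_zero).resolve_left
      (hφ.not_eventually_eq_zero_of_ne_zero hU hz₁ hφz₁ hz₀)
  have hpunct : ∀ᶠ z in 𝓝[≠] z₀, deriv φ z = (φ * f) z := by
    filter_upwards [hne, h.filter_mono nhdsWithin_le_nhds] with z hz hlog
    rw [logDeriv_apply, div_eq_iff hz] at hlog
    rw [Pi.mul_apply, hlog, mul_comm]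
  have hderiv : AnalyticOnNhd 𝕜 (deriv φ) U := hφ.deriv
  exact hderiv.eqOn_of_preconnected_of_eventuallyEq (hφ.mul hf) hU hz₀
    (((hderiv z₀ hz₀).frequently_eq_iff_eventually_eq ((hφ.mul hf) z₀ hz₀)).mp
      hpunct.frequently)

end

theorem Complex.norm_one_sub_inv_lt_one {s : ℂ} (hs : 1 / 2 < s.re) : ‖1 - s⁻¹‖ < 1 := by
  have hs0 : s ≠ 0 := by rintro rfl; norm_num at hs
  have hnormSq : Complex.normSq (s - 1) < Complex.normSq s := by
    simp only [Complex.normSq_apply, Complex.sub_re, Complex.sub_im, Complex.one_re,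
      Complex.one_im]
    nlinarith
  rw [show 1 - s⁻¹ = (s - 1) / s by field_simp, norm_div, div_lt_one (norm_pos_iff.mpr hs0),
    ← sq_lt_sq₀ (norm_nonneg _) (norm_nonneg _), ← Complex.normSq_eq_norm_sq,
    ← Complex.normSq_eq_norm_sq]
  exact hnormSq

theorem Differentiable.exists_mem_ne_zero {ξ : ℂ → ℂ} (hξ : Differentiable ℂ ξ)
    (hne : ∃ s, ξ s ≠ 0) {U : Set ℂ} (hU : IsOpen U) (hUne : U.Nonempty) : ∃ s ∈ U, ξ s ≠ 0 := by
  by_contra! h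
  obtain ⟨s₀, hs₀⟩ := hUne
  obtain ⟨s, hs⟩ := hne
  have hξ0 : ξ = fun _ => 0 := AnalyticOnNhd.eq_of_eventuallyEq (fun z _ => hξ.analyticAt z)
    analyticOnNhd_const (eventuallyEq_of_mem (hU.mem_nhds hs₀) h)
  exact hs (congrFun hξ0 s)

theorem Differentiable.analyticOnNhd_comp_one_div_one_sub {ξ : ℂ → ℂ} (hξ : Differentiable ℂ ξ) :
    AnalyticOnNhd ℂ (fun w => ξ (1 / (1 - w))) {1}ᶜ := by
  refine DifferentiableOn.analyticOnNhd (fun w hw => ?_) isOpen_compl_singleton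
  have : 1 - w ≠ 0 := sub_ne_zero.mpr (Ne.symm hw)
  fun_prop (disch := assumption)

theorem re_eq_half_of_forall_half_lt_re_ne_zero {ξ : ℂ → ℂ}
    (hfe : (∀ s : ℂ, ξ s = ξ (1 - s)) ∨ (∀ s : ℂ, ξ s = -ξ (1 - s)))
    (hfree : ∀ s : ℂ, 1 / 2 < s.re → ξ s ≠ 0) {s : ℂ} (hs : ξ s = 0) : s.re = 1 / 2 := by
  have hs' : ξ (1 - s) = 0 := by
    rcases hfe with hfe | hfe <;> simp [hfe (1 - s), hs]
  by_contra hre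
  rcases lt_or_gt_of_ne hre with hlt | hgt
  · exact hfree (1 - s) (by rw [Complex.sub_re, Complex.one_re]; linarith) hs'
  · exact hfree s hgt hs

/-- Let `ξ` be an entire function, not identically zero, satisfying the
functional equation `ξ(s) = ξ(1-s)` or `ξ(s) = -ξ(1-s)`.  Let `φ(z) = ξ(1/(1-z))`
and let `λ(n+1)` be the Taylor coefficients of `φ'(z)/φ(z)` at `z = 0`.  If the
power series `∑ λ(n+1) zⁿ` converges for all `|z| < 1`, then all zeros of `ξ`
lie on the line `Re s = 1/2`. -/
theorem zeros_on_critical_line_of_log_deriv_series_converges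
    (ξ : ℂ → ℂ) (hξ : Differentiable ℂ ξ) (hne : ∃ s : ℂ, ξ s ≠ 0)
    (hfe : (∀ s : ℂ, ξ s = ξ (1 - s)) ∨ (∀ s : ℂ, ξ s = -ξ (1 - s)))
    (lam : ℕ → ℂ)
    (hlam : ∀ᶠ z in nhds (0 : ℂ),
      deriv (fun w : ℂ => ξ (1 / (1 - w))) z / ξ (1 / (1 - z)) =
        ∑' n : ℕ, lam (n + 1) * z ^ n)
    (hconv : ∀ z : ℂ, ‖z‖ < 1 → Summable fun n : ℕ => lam (n + 1) * z ^ n) :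
    ∀ s : ℂ, ξ s = 0 → s.re = 1 / 2 := by
  set φ : ℂ → ℂ := fun w => ξ (1 / (1 - w))
  set U : Set ℂ := Metric.ball 0 1
  have hmem : ∀ s : ℂ, 1 / 2 < s.re → 1 - s⁻¹ ∈ U := fun s hs => by
    simpa [U] using Complex.norm_one_sub_inv_lt_one hs
  have hφs : ∀ s : ℂ, φ (1 - s⁻¹) = ξ s := fun s => by simp [φ]
  have hφ : AnalyticOnNhd ℂ φ U := hξ.analyticOnNhd_comp_one_div_one_sub.mono
    fun z hz (h1 : z = 1) => by simp [U, h1] at hz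
  have hF : AnalyticOnNhd ℂ (fun z => ∑' n : ℕ, lam (n + 1) * z ^ n) U := by
    simpa [U] using analyticOnNhd_tsum_mul_pow (R := 1) (by simpa using hconv)
  have hU : IsPreconnected U := (convex_ball 0 1).isPreconnected
  obtain ⟨s₁, hs₁, hξs₁⟩ := hξ.exists_mem_ne_zero hne (U := {s | 1 / 2 < s.re})
    (isOpen_lt continuous_const Complex.continuous_re) ⟨1, by norm_num⟩
  have hφs₁ : φ (1 - s₁⁻¹) ≠ 0 := by rwa [hφs]
  have hderiv := hφ.eqOn_deriv_mul_of_logDeriv_eventuallyEq hF hU (hmem s₁ hs₁) hφs₁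
    (Metric.mem_ball_self one_pos) hlam
  intro s hs
  refine re_eq_half_of_forall_half_lt_re_ne_zero hfe (fun t ht => ?_) hs
  rw [← hφs]
  exact hφ.ne_zero_of_deriv_eq_mul hF Metric.isOpen_ball hU hderiv (hmem s₁ hs₁) hφs₁
    (hmem t ht)
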